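/- Suppose the Lotka–Volterra cooperative system admits a traveling wave solution (ψ₁, ψ₂) connecting (0,0) with (k₁, k₂) with speed c. Let φ₁, φ₂ : ℝ → ℝ be continuous, compactly supported, with 0 ≤ φ_i(x) < k_i for all x (i = 1,2), and let (u₁, u₂) be a classical solution of the system with initial data (φ₁, φ₂). Then for every ε > 0, lim_{t→∞} sup_{|x| ≥ (c+ε)t} u₁(t,x) = 0 and lim_{t→∞} sup_{|x| ≥ (c+ε)t} u₂(t,x) = 0. -/

import Mathlib

open Real Set Filter Topology MeasureTheory

/-- Partial derivative in time of a function `u : ℝ → ℝ → ℝ` (time, then space). -/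
noncomputable def pdT (u : ℝ → ℝ → ℝ) (t x : ℝ) : ℝ := deriv (fun s => u s x) t

/-- Second partial derivative in space of a function `u : ℝ → ℝ → ℝ`. -/
noncomputable def pdXX (u : ℝ → ℝ → ℝ) (t x : ℝ) : ℝ := deriv (deriv (u t)) x

/-- A function `u : [0,∞) × ℝ → ℝ` (encoded as a total function) which is bounded and
uniformly continuous on `[0,∞) × ℝ`, continuously differentiable in `t` and twice
continuously differentiable in `x` on `(0,∞) × ℝ`. -/
structure RegularFn (u : ℝ → ℝ → ℝ) : Prop where
  bounded : ∃ M : ℝ, ∀ t x : ℝ, 0 ≤ t → |u t x| ≤ M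
  unifCont : UniformContinuousOn (fun p : ℝ × ℝ => u p.1 p.2) (Ici 0 ×ˢ (univ : Set ℝ))
  contT : ∀ x : ℝ, ContDiffOn ℝ 1 (fun s => u s x) (Ioi 0)
  contX : ∀ t : ℝ, 0 < t → ContDiff ℝ 2 (u t)

/-- `(u₁, u₂)` is a classical solution of the Lotka–Volterra cooperative system
`∂u₁/∂t = d₁ ∂²u₁/∂x² + r₁u₁(1 − u₁ + b₁u₂)`,
`∂u₂/∂t = d₂ ∂²u₂/∂x² + r₂u₂(1 − u₂ + b₂u₁)`
with initial data `(φ₁, φ₂)`. -/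
structure IsLVSolution (d₁ d₂ r₁ r₂ b₁ b₂ : ℝ) (φ₁ φ₂ : ℝ → ℝ) (u₁ u₂ : ℝ → ℝ → ℝ) : Prop where
  reg1 : RegularFn u₁
  reg2 : RegularFn u₂
  pde1 : ∀ t x : ℝ, 0 < t →
    pdT u₁ t x = d₁ * pdXX u₁ t x + r₁ * u₁ t x * (1 - u₁ t x + b₁ * u₂ t x)
  pde2 : ∀ t x : ℝ, 0 < t →
    pdT u₂ t x = d₂ * pdXX u₂ t x + r₂ * u₂ t x * (1 - u₂ t x + b₂ * u₁ t x)
  init1 : ∀ x : ℝ, u₁ 0 x = φ₁ x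
  init2 : ∀ x : ℝ, u₂ 0 x = φ₂ x

/-- `(ψ₁, ψ₂)` is a traveling wave solution of the cooperative system with speed `c`
connecting `(0,0)` with `(k₁,k₂)`. -/
structure IsTravelingWave (d₁ d₂ r₁ r₂ b₁ b₂ c : ℝ) (ψ₁ ψ₂ : ℝ → ℝ) : Prop where
  pos1 : ∀ s, 0 < ψ₁ s
  pos2 : ∀ s, 0 < ψ₂ s
  bdd1 : ∃ M, ∀ s, ψ₁ s ≤ M
  bdd2 : ∃ M, ∀ s, ψ₂ s ≤ M
  uc1 : UniformContinuous ψ₁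
  uc2 : UniformContinuous ψ₂
  smooth1 : ContDiff ℝ 2 ψ₁
  smooth2 : ContDiff ℝ 2 ψ₂
  ode1 : ∀ s : ℝ,
    d₁ * deriv (deriv ψ₁) s - c * deriv ψ₁ s + r₁ * ψ₁ s * (1 - ψ₁ s + b₁ * ψ₂ s) = 0
  ode2 : ∀ s : ℝ,
    d₂ * deriv (deriv ψ₂) s - c * deriv ψ₂ s + r₂ * ψ₂ s * (1 - ψ₂ s + b₂ * ψ₁ s) = 0
  limNeg1 : Tendsto ψ₁ atBot (𝓝 0)
  limNeg2 : Tendsto ψ₂ atBot (𝓝 0)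
  limPos1 : Tendsto ψ₁ atTop (𝓝 ((1 + b₁) / (1 - b₁ * b₂)))
  limPos2 : Tendsto ψ₂ atTop (𝓝 ((1 + b₂) / (1 - b₁ * b₂)))


/-!
A comparison argument with translated travelling waves. If `u ≤ v` at time `0` and `u ≥ 0`,
the difference `w = v - u` satisfies a linear cooperative system
`∂ₜwᵢ ≥ dᵢ ∂ₓₓwᵢ + aᵢ wᵢ + cᵢ wⱼ` with bounded `aᵢ` and bounded `cᵢ ≥ 0`, and such `w` stays
nonnegative: otherwise `w + η e^{Kt} (1 + x²)`, for `K` large, has a first zero, where the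
first and second derivative tests contradict the inequality.
Comparing with the zero solution gives `u ≥ 0`. The translates `ψ(±x + ct + s₀)` are solutions,
and for large `s₀` they lie above the compactly supported data, since `ψᵢ → kᵢ > max φᵢ` at
`+∞`. Hence `uᵢ(t, x) ≤ ψᵢ(ct - |x| + s₀)`, whose argument is at most `-εt + s₀` on
`|x| ≥ (c + ε)t`, and `ψᵢ → 0` at `-∞`.
-/

lemma deriv_deriv_eq_iteratedDeriv_two {𝕜 F : Type*} [NontriviallyNormedField 𝕜]
    [NormedAddCommGroup F] [NormedSpace 𝕜 F] (f : 𝕜 → F) :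
    deriv (deriv f) = iteratedDeriv 2 f := by
  rw [iteratedDeriv_succ, iteratedDeriv_one]

theorem IsLocalMin.deriv_deriv_nonneg {f : ℝ → ℝ} {a : ℝ} (h : IsLocalMin f a)
    (hc : ContinuousAt f a) : 0 ≤ deriv (deriv f) a := by
  by_contra! hneg
  -- `f'' a < 0` would make `a` a local maximum as well, so `f` would be constant near `a`.
  have hconst : f =ᶠ[𝓝 a] fun _ => f a :=
    (h.and (isLocalMax_of_deriv_deriv_neg hneg h.deriv_eq_zero hc)).mono
      fun x hx => le_antisymm hx.2 hx.1
  have hderiv : deriv f =ᶠ[𝓝 a] fun _ => 0 :=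
    hconst.eventuallyEq_nhds.mono fun x hx => by rw [hx.deriv_eq, deriv_const]
  rw [hderiv.deriv_eq, deriv_const] at hneg
  exact hneg.false

theorem IsLocalMinOn.hasDerivWithinAt_Iic_nonpos {f : ℝ → ℝ} {f' b : ℝ}
    (h : IsLocalMinOn f (Iic b) b) (hf : HasDerivWithinAt f f' (Iic b) b) : f' ≤ 0 := by
  have hmem : (-1 : ℝ) ∈ posTangentConeAt (Iic b) b :=
    mem_posTangentConeAt_of_segment_subset (by
      rw [segment_symm, segment_eq_Icc (by linarith)]
      exact Icc_subset_Iic_self)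
  simpa using h.hasFDerivWithinAt_nonneg hf.hasFDerivWithinAt hmem

lemma deriv_deriv_add_quadratic {f : ℝ → ℝ} (hf : ContDiff ℝ 2 f) (β x : ℝ) :
    deriv (deriv fun y => f y + β * (1 + y ^ 2)) x = deriv (deriv f) x + 2 * β := by
  simp only [deriv_deriv_eq_iteratedDeriv_two]
  rw [iteratedDeriv_fun_add hf.contDiffAt (by fun_prop)]
  simp [iteratedDeriv_const_add, mul_comm]

theorem exists_first_zero {X : Type*} [TopologicalSpace X] {Z : ℝ → X → ℝ} {T : ℝ}
    {C : Set X} (hC : IsCompact C)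
    (hZ : ContinuousOn (fun p : ℝ × X => Z p.1 p.2) (Icc 0 T ×ˢ univ))
    (hinit : ∀ x, 0 < Z 0 x) (hout : ∀ t ∈ Icc 0 T, ∀ x ∉ C, 0 < Z t x)
    (hneg : ∃ t ∈ Icc 0 T, ∃ x, Z t x ≤ 0) :
    ∃ t₀ ∈ Ioc 0 T, ∃ x₀, Z t₀ x₀ = 0 ∧ (∀ x, 0 ≤ Z t₀ x) ∧
      ∀ t ∈ Ico 0 t₀, ∀ x, 0 < Z t x := by
  set A := Icc 0 T ×ˢ univ ∩ (fun p : ℝ × X => Z p.1 p.2) ⁻¹' Iic 0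
  have hA : IsCompact A := by
    refine ((isCompact_Icc (a := 0) (b := T)).prod hC).of_isClosed_subset
      (hZ.preimage_isClosed_of_isClosed (isClosed_Icc.prod isClosed_univ) isClosed_Iic) ?_
    rintro ⟨t, x⟩ ⟨⟨ht, -⟩, hzx⟩
    by_contra hx
    exact (hout t ht x fun hxC => hx ⟨ht, hxC⟩).not_ge hzx
  obtain ⟨t, ht, x, hx⟩ := hneg
  obtain ⟨⟨t₀, x₀⟩, ⟨⟨ht₀, -⟩, hz₀⟩, hmin⟩ :=
    hA.exists_isMinOn ⟨(t, x), ⟨ht, mem_univ x⟩, hx⟩ continuous_fst.continuousOn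
  have hbefore : ∀ s ∈ Ico 0 t₀, ∀ y, 0 < Z s y := fun s hs y => by
    by_contra! hy
    exact hs.2.not_ge (hmin (a := (s, y)) ⟨⟨⟨hs.1, hs.2.le.trans ht₀.2⟩, mem_univ y⟩, hy⟩)
  have hpos : 0 < t₀ := ht₀.1.lt_of_ne fun h => (hinit x₀).not_ge (h ▸ hz₀)
  have hat : ∀ y, 0 ≤ Z t₀ y := fun y => by
    have hcont : ContinuousWithinAt (fun s => Z s y) (Icc 0 T) t₀ :=
      hZ.comp (continuousOn_id.prodMk continuousOn_const) (fun s hs => ⟨hs, mem_univ y⟩) t₀ ht₀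
    have := right_nhdsWithin_Ico_neBot hpos
    exact ge_of_tendsto (hcont.mono fun s hs => ⟨hs.1, hs.2.le.trans ht₀.2⟩)
      (eventually_mem_nhdsWithin.mono fun s hs => (hbefore s hs y).le)
  exact ⟨t₀, ⟨hpos, ht₀.2⟩, x₀, le_antisymm hz₀ (hat x₀), hat, hbefore⟩

lemma RegularFn.differentiableAt {u : ℝ → ℝ → ℝ} (hu : RegularFn u) {t : ℝ} (ht : 0 < t)
    (x : ℝ) : DifferentiableAt ℝ (fun s => u s x) t :=
  ((hu.contT x).differentiableOn one_ne_zero).differentiableAt (Ioi_mem_nhds ht)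

lemma RegularFn.sub {u v : ℝ → ℝ → ℝ} (hu : RegularFn u) (hv : RegularFn v) :
    RegularFn fun t x => u t x - v t x where
  bounded := by
    obtain ⟨M, hM⟩ := hu.bounded
    obtain ⟨N, hN⟩ := hv.bounded
    exact ⟨M + N, fun t x ht => (abs_sub _ _).trans (add_le_add (hM t x ht) (hN t x ht))⟩
  unifCont := uniformContinuousOn_iff_restrict.2 <|
    (uniformContinuousOn_iff_restrict.1 hu.unifCont).sub
      (uniformContinuousOn_iff_restrict.1 hv.unifCont)
  contT x := (hu.contT x).sub (hv.contT x)
  contX t ht := (hu.contX t ht).sub (hv.contX t ht)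

lemma RegularFn.pdT_sub {u v : ℝ → ℝ → ℝ} (hu : RegularFn u) (hv : RegularFn v) {t : ℝ}
    (ht : 0 < t) (x : ℝ) :
    pdT (fun t x => u t x - v t x) t x = pdT u t x - pdT v t x :=
  deriv_fun_sub (hu.differentiableAt ht x) (hv.differentiableAt ht x)

lemma RegularFn.pdXX_sub {u v : ℝ → ℝ → ℝ} (hu : RegularFn u) (hv : RegularFn v) {t : ℝ}
    (ht : 0 < t) (x : ℝ) :
    pdXX (fun t x => u t x - v t x) t x = pdXX u t x - pdXX v t x := by
  simp only [pdXX, deriv_deriv_eq_iteratedDeriv_two]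
  exact iteratedDeriv_fun_sub (hu.contX t ht).contDiffAt (hv.contX t ht).contDiffAt

lemma regularFn_zero : RegularFn fun _ _ => 0 where
  bounded := ⟨0, by simp⟩
  unifCont := uniformContinuous_const.uniformContinuousOn
  contT _ := contDiffOn_const
  contX _ _ := contDiff_const

lemma regularFn_comp_affine {ψ : ℝ → ℝ} (hbdd : ∃ M, ∀ s, |ψ s| ≤ M)
    (huc : UniformContinuous ψ) (hψ : ContDiff ℝ 2 ψ) (σ c s₀ : ℝ) :
    RegularFn fun t x => ψ (σ * x + c * t + s₀) where
  bounded := hbdd.imp fun _ hM _ _ _ => hM _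
  unifCont := by
    have hlin : UniformContinuous fun p : ℝ × ℝ => σ * p.2 + c * p.1 + s₀ :=
      ((uniformContinuous_snd.const_mul' σ).add (uniformContinuous_fst.const_mul' c)).add
        uniformContinuous_const
    exact (huc.comp hlin).uniformContinuousOn
  contT x := ((hψ.of_le one_le_two).comp
    (contDiff_const.add (contDiff_const.mul contDiff_id) |>.add contDiff_const)).contDiffOn
  contX t _ := hψ.comp ((contDiff_const.mul contDiff_id).add contDiff_const |>.add contDiff_const)

lemma pdT_comp_affine {ψ : ℝ → ℝ} (hψ : Differentiable ℝ ψ) (σ c s₀ t x : ℝ) :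
    pdT (fun t x => ψ (σ * x + c * t + s₀)) t x = c * deriv ψ (σ * x + c * t + s₀) := by
  have h := (((hasDerivAt_id' t).const_mul c).const_add (σ * x)).add_const s₀
  exact ((hψ _).hasDerivAt.comp t h).deriv.trans (by ring)

lemma pdXX_comp_affine {ψ : ℝ → ℝ} (hψ : ContDiff ℝ 2 ψ) (σ c s₀ t x : ℝ) :
    pdXX (fun t x => ψ (σ * x + c * t + s₀)) t x =
      σ ^ 2 * deriv (deriv ψ) (σ * x + c * t + s₀) := by
  have h := iteratedDeriv_comp_const_mul (n := 2) (f := fun z => ψ (z + (c * t + s₀)))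
    (hψ.comp (contDiff_id.add contDiff_const)) σ
  beta_reduce at h
  simp only [pdXX, deriv_deriv_eq_iteratedDeriv_two, add_assoc]
  rw [h, iteratedDeriv_comp_add_const]

lemma false_of_first_zero {d L K η t₀ x₀ : ℝ} {w w' : ℝ → ℝ → ℝ}
    (hd : 0 ≤ d) (hL : 0 ≤ L) (hK : 2 * d + 2 * L < K) (hη : 0 < η) (ht₀ : 0 < t₀)
    (hwt : DifferentiableAt ℝ (fun s => w s x₀) t₀) (hwx : ContDiff ℝ 2 (w t₀))
    (hpde : d * pdXX w t₀ x₀ - L * |w t₀ x₀| + L * min (w' t₀ x₀) 0 ≤ pdT w t₀ x₀)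
    (hzero : w t₀ x₀ + η * exp (K * t₀) * (1 + x₀ ^ 2) = 0)
    (hpartner : 0 ≤ w' t₀ x₀ + η * exp (K * t₀) * (1 + x₀ ^ 2))
    (hspace : ∀ x, 0 ≤ w t₀ x + η * exp (K * t₀) * (1 + x ^ 2))
    (htime : ∀ t ∈ Ico 0 t₀, 0 ≤ w t x₀ + η * exp (K * t) * (1 + x₀ ^ 2)) : False := by
  set e := exp (K * t₀)
  set q := η * e * (1 + x₀ ^ 2)
  have hxx : 0 ≤ pdXX w t₀ x₀ + 2 * (η * e) := by
    have hmin : IsLocalMin (fun x => w t₀ x + η * e * (1 + x ^ 2)) x₀ :=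
      Eventually.of_forall fun x => hzero.trans_le (hspace x)
    have := hmin.deriv_deriv_nonneg (hwx.continuous.add (by fun_prop)).continuousAt
    rwa [deriv_deriv_add_quadratic hwx] at this
  have htt : pdT w t₀ x₀ + K * q ≤ 0 := by
    have hpen : HasDerivAt (fun s => η * exp (K * s) * (1 + x₀ ^ 2)) (K * q) t₀ :=
      ((((hasDerivAt_id' t₀).const_mul K).exp.const_mul η).mul_const _).congr_deriv (by ring)
    refine IsLocalMinOn.hasDerivWithinAt_Iic_nonpos ?_
      (hwt.hasDerivAt.add hpen).hasDerivWithinAt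
    filter_upwards [Icc_mem_nhdsLE ht₀] with t ht
    rcases ht.2.lt_or_eq with hlt | rfl
    · exact hzero.trans_le (htime t ⟨ht.1, hlt⟩)
    · exact le_rfl
  have hq : η * e ≤ q := le_mul_of_one_le_right (by positivity) (by nlinarith [sq_nonneg x₀])
  have hq0 : 0 < q := by positivity
  have hw : w t₀ x₀ = -q := by linarith
  have hw' : -q ≤ min (w' t₀ x₀) 0 := le_min (by linarith) (by linarith)
  rw [hw, abs_neg, abs_of_pos hq0] at hpde
  nlinarith [mul_le_mul_of_nonneg_left hw' hL, mul_le_mul_of_nonneg_left hq hd]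

section CooperativeSupersolution

variable {d₁ d₂ L₁ L₂ : ℝ} {w₁ w₂ : ℝ → ℝ → ℝ}

lemma pos_add_penalty_of_cooperative_supersolution
    (hw₁ : RegularFn w₁) (hw₂ : RegularFn w₂) (hd₁ : 0 ≤ d₁) (hd₂ : 0 ≤ d₂)
    (hL₁ : 0 ≤ L₁) (hL₂ : 0 ≤ L₂)
    (hpde₁ : ∀ t x, 0 < t →
      d₁ * pdXX w₁ t x - L₁ * |w₁ t x| + L₁ * min (w₂ t x) 0 ≤ pdT w₁ t x)
    (hpde₂ : ∀ t x, 0 < t →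
      d₂ * pdXX w₂ t x - L₂ * |w₂ t x| + L₂ * min (w₁ t x) 0 ≤ pdT w₂ t x)
    (hinit₁ : ∀ x, 0 ≤ w₁ 0 x) (hinit₂ : ∀ x, 0 ≤ w₂ 0 x)
    {K η : ℝ} (hK₁ : 2 * d₁ + 2 * L₁ < K) (hK₂ : 2 * d₂ + 2 * L₂ < K) (hη : 0 < η) (T x : ℝ)
    (hT : 0 ≤ T) :
    0 < min (w₁ T x + η * exp (K * T) * (1 + x ^ 2)) (w₂ T x + η * exp (K * T) * (1 + x ^ 2)) := by
  obtain ⟨M₁, hM₁⟩ := hw₁.bounded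
  obtain ⟨M₂, hM₂⟩ := hw₂.bounded
  have hK : 0 ≤ K := by linarith
  have hout : ∀ t ∈ Icc 0 T, ∀ x ∉ Icc (-√((M₁ + M₂) / η)) √((M₁ + M₂) / η),
      0 < min (w₁ t x + η * exp (K * t) * (1 + x ^ 2))
        (w₂ t x + η * exp (K * t) * (1 + x ^ 2)) := by
    intro t ht x hx
    rw [mem_Icc, ← abs_le, not_le] at hx
    have hx2 : M₁ + M₂ < η * x ^ 2 := by
      rw [← sq_abs, ← div_lt_iff₀' hη]
      exact lt_sq_of_sqrt_lt hx
    have hpen : η * x ^ 2 ≤ η * exp (K * t) * (1 + x ^ 2) := by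
      nlinarith [mul_nonneg (mul_nonneg hη.le (sub_nonneg.2 (one_le_exp (mul_nonneg hK ht.1))))
        (by positivity : (0 : ℝ) ≤ 1 + x ^ 2)]
    have h₁ := abs_le.1 (hM₁ t x ht.1)
    have h₂ := abs_le.1 (hM₂ t x ht.1)
    exact lt_min (by linarith) (by linarith)
  have hcont {w : ℝ → ℝ → ℝ} (hw : RegularFn w) : ContinuousOn
      (fun p : ℝ × ℝ => w p.1 p.2 + η * exp (K * p.1) * (1 + p.2 ^ 2)) (Icc 0 T ×ˢ univ) :=
    (hw.unifCont.continuousOn.mono (prod_mono_left Icc_subset_Ici_self)).add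
      (Continuous.continuousOn (by fun_prop))
  by_contra! hneg
  obtain ⟨t₀, ht₀, x₀, hzero, hspace, htime⟩ := exists_first_zero isCompact_Icc
    ((hcont hw₁).inf (hcont hw₂))
    (fun x => by
      simp only [mul_zero, exp_zero, mul_one]
      exact lt_min (by nlinarith [hinit₁ x]) (by nlinarith [hinit₂ x]))
    hout ⟨T, ⟨hT, le_rfl⟩, x, hneg⟩
  rcases min_choice (w₁ t₀ x₀ + η * exp (K * t₀) * (1 + x₀ ^ 2))
    (w₂ t₀ x₀ + η * exp (K * t₀) * (1 + x₀ ^ 2)) with h | h <;> rw [h] at hzero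
  · exact false_of_first_zero hd₁ hL₁ hK₁ hη ht₀.1 (hw₁.differentiableAt ht₀.1 x₀)
      (hw₁.contX t₀ ht₀.1) (hpde₁ t₀ x₀ ht₀.1) hzero (hzero.symm.trans_le (h ▸ min_le_right _ _))
      (fun x => (le_min_iff.1 (hspace x)).1) (fun t ht => (lt_min_iff.1 (htime t ht x₀)).1.le)
  · exact false_of_first_zero hd₂ hL₂ hK₂ hη ht₀.1 (hw₂.differentiableAt ht₀.1 x₀)
      (hw₂.contX t₀ ht₀.1) (hpde₂ t₀ x₀ ht₀.1) hzero (hzero.symm.trans_le (h ▸ min_le_left _ _))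
      (fun x => (le_min_iff.1 (hspace x)).2) (fun t ht => (lt_min_iff.1 (htime t ht x₀)).2.le)

theorem nonneg_of_cooperative_supersolution
    (hw₁ : RegularFn w₁) (hw₂ : RegularFn w₂) (hd₁ : 0 ≤ d₁) (hd₂ : 0 ≤ d₂)
    (hL₁ : 0 ≤ L₁) (hL₂ : 0 ≤ L₂)
    (hpde₁ : ∀ t x, 0 < t →
      d₁ * pdXX w₁ t x - L₁ * |w₁ t x| + L₁ * min (w₂ t x) 0 ≤ pdT w₁ t x)
    (hpde₂ : ∀ t x, 0 < t →
      d₂ * pdXX w₂ t x - L₂ * |w₂ t x| + L₂ * min (w₁ t x) 0 ≤ pdT w₂ t x)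
    (hinit₁ : ∀ x, 0 ≤ w₁ 0 x) (hinit₂ : ∀ x, 0 ≤ w₂ 0 x) :
    ∀ t x, 0 ≤ t → 0 ≤ w₁ t x ∧ 0 ≤ w₂ t x := by
  intro t x ht
  set K := 2 * (d₁ + d₂ + L₁ + L₂) + 1
  have hc : 0 < exp (K * t) * (1 + x ^ 2) := by positivity
  have hpos (ε : ℝ) (hε : 0 < ε) : 0 < min (w₁ t x + ε) (w₂ t x + ε) := by
    have := pos_add_penalty_of_cooperative_supersolution hw₁ hw₂ hd₁ hd₂ hL₁ hL₂ hpde₁ hpde₂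
      hinit₁ hinit₂ (K := K) (by linarith) (by linarith) (div_pos hε hc) t x ht
    rwa [mul_assoc, div_mul_cancel₀ _ hc.ne'] at this
  exact ⟨le_of_forall_pos_lt_add fun ε hε => (lt_min_iff.1 (hpos ε hε)).1,
    le_of_forall_pos_lt_add fun ε hε => (lt_min_iff.1 (hpos ε hε)).2⟩

end CooperativeSupersolution

lemma neg_mul_abs_add_mul_min_le {a c L w w' : ℝ} (ha : |a| ≤ L) (hc : 0 ≤ c) (hcL : c ≤ L) :
    -L * |w| + L * min w' 0 ≤ a * w + c * w' := by
  have h₁ : -L * |w| ≤ a * w := by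
    nlinarith [neg_abs_le (a * w), abs_mul a w, mul_le_mul_of_nonneg_right ha (abs_nonneg w)]
  have h₂ : L * min w' 0 ≤ c * w' := calc
    L * min w' 0 ≤ c * min w' 0 := mul_le_mul_of_nonpos_right hcL (min_le_right _ _)
    _ ≤ c * w' := mul_le_mul_of_nonneg_left (min_le_left _ _) hc
  linarith

lemma reaction_sub_ge {r b M u u' v v' : ℝ} (hr : 0 ≤ r) (hb : 0 ≤ b) (hu₀ : 0 ≤ u)
    (hu : u ≤ M) (hv : |v| ≤ M) (hv' : |v'| ≤ M) :
    -(r * (1 + 2 * M + b * M)) * |v - u| + r * (1 + 2 * M + b * M) * min (v' - u') 0 ≤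
      r * v * (1 - v + b * v') - r * u * (1 - u + b * u') := by
  have hM : 0 ≤ M := hu₀.trans hu
  have hcoef : |r * (1 - v - u + b * v')| ≤ r * (1 + 2 * M + b * M) := by
    rw [abs_mul, abs_of_nonneg hr]
    refine mul_le_mul_of_nonneg_left ?_ hr
    have := abs_le.1 hv
    rw [abs_le]
    constructor <;> nlinarith [mul_le_mul_of_nonneg_left (abs_le.1 hv').1 hb,
      mul_le_mul_of_nonneg_left (abs_le.1 hv').2 hb]
  have hcoup : r * b * u ≤ r * (1 + 2 * M + b * M) := by
    rw [mul_assoc]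
    exact mul_le_mul_of_nonneg_left (by nlinarith [mul_le_mul_of_nonneg_left hu hb]) hr
  have := neg_mul_abs_add_mul_min_le (w := v - u) (w' := v' - u') hcoef (by positivity) hcoup
  linarith [show r * v * (1 - v + b * v') - r * u * (1 - u + b * u') =
    r * (1 - v - u + b * v') * (v - u) + r * b * u * (v' - u') by ring]

section LotkaVolterra

variable {d₁ d₂ r₁ r₂ b₁ b₂ : ℝ}

theorem IsLVSolution.le_of_le {φ₁ φ₂ χ₁ χ₂ : ℝ → ℝ} {u₁ u₂ v₁ v₂ : ℝ → ℝ → ℝ}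
    (hd₁ : 0 ≤ d₁) (hd₂ : 0 ≤ d₂) (hr₁ : 0 ≤ r₁) (hr₂ : 0 ≤ r₂) (hb₁ : 0 ≤ b₁) (hb₂ : 0 ≤ b₂)
    (hu : IsLVSolution d₁ d₂ r₁ r₂ b₁ b₂ φ₁ φ₂ u₁ u₂)
    (hv : IsLVSolution d₁ d₂ r₁ r₂ b₁ b₂ χ₁ χ₂ v₁ v₂)
    (hu₀ : ∀ t x, 0 ≤ t → 0 ≤ u₁ t x ∧ 0 ≤ u₂ t x)
    (h₁ : ∀ x, φ₁ x ≤ χ₁ x) (h₂ : ∀ x, φ₂ x ≤ χ₂ x) :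
    ∀ t x, 0 ≤ t → u₁ t x ≤ v₁ t x ∧ u₂ t x ≤ v₂ t x := by
  obtain ⟨M₁, hM₁⟩ := hu.reg1.bounded
  obtain ⟨M₂, hM₂⟩ := hu.reg2.bounded
  obtain ⟨N₁, hN₁⟩ := hv.reg1.bounded
  obtain ⟨N₂, hN₂⟩ := hv.reg2.bounded
  set M := max (max M₁ M₂) (max N₁ N₂)
  have hbound {f : ℝ → ℝ → ℝ} {B : ℝ} (hf : ∀ t x, 0 ≤ t → |f t x| ≤ B) (hB : B ≤ M) :
      ∀ t x, 0 ≤ t → |f t x| ≤ M := fun t x ht => (hf t x ht).trans hB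
  replace hM₁ := hbound hM₁ (by simp [M])
  replace hM₂ := hbound hM₂ (by simp [M])
  replace hN₁ := hbound hN₁ (by simp [M])
  replace hN₂ := hbound hN₂ (by simp [M])
  have hM : 0 ≤ M := (abs_nonneg _).trans (hM₁ 0 0 le_rfl)
  have hw := nonneg_of_cooperative_supersolution (hv.reg1.sub hu.reg1) (hv.reg2.sub hu.reg2)
    hd₁ hd₂ (L₁ := r₁ * (1 + 2 * M + b₁ * M)) (L₂ := r₂ * (1 + 2 * M + b₂ * M))
    (by positivity) (by positivity) (fun t x ht => ?_) (fun t x ht => ?_)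
    (fun x => by simp [hu.init1, hv.init1, h₁ x]) (fun x => by simp [hu.init2, hv.init2, h₂ x])
  · exact fun t x ht => ⟨sub_nonneg.1 (hw t x ht).1, sub_nonneg.1 (hw t x ht).2⟩
  · rw [hv.reg1.pdXX_sub hu.reg1 ht, hv.reg1.pdT_sub hu.reg1 ht, hv.pde1 t x ht, hu.pde1 t x ht]
    linarith [reaction_sub_ge (u' := u₂ t x) hr₁ hb₁ (hu₀ t x ht.le).1
      ((le_abs_self _).trans (hM₁ t x ht.le)) (hN₁ t x ht.le) (hN₂ t x ht.le)]
  · rw [hv.reg2.pdXX_sub hu.reg2 ht, hv.reg2.pdT_sub hu.reg2 ht, hv.pde2 t x ht, hu.pde2 t x ht]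
    linarith [reaction_sub_ge (u' := u₁ t x) hr₂ hb₂ (hu₀ t x ht.le).2
      ((le_abs_self _).trans (hM₂ t x ht.le)) (hN₂ t x ht.le) (hN₁ t x ht.le)]

lemma isLVSolution_zero (d₁ d₂ r₁ r₂ b₁ b₂ : ℝ) :
    IsLVSolution d₁ d₂ r₁ r₂ b₁ b₂ 0 0 (fun _ _ => 0) (fun _ _ => 0) where
  reg1 := regularFn_zero
  reg2 := regularFn_zero
  pde1 _ _ _ := by simp [pdT, pdXX]
  pde2 _ _ _ := by simp [pdT, pdXX]
  init1 _ := rfl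
  init2 _ := rfl

theorem IsLVSolution.nonneg {φ₁ φ₂ : ℝ → ℝ} {u₁ u₂ : ℝ → ℝ → ℝ}
    (hd₁ : 0 ≤ d₁) (hd₂ : 0 ≤ d₂) (hr₁ : 0 ≤ r₁) (hr₂ : 0 ≤ r₂) (hb₁ : 0 ≤ b₁) (hb₂ : 0 ≤ b₂)
    (hu : IsLVSolution d₁ d₂ r₁ r₂ b₁ b₂ φ₁ φ₂ u₁ u₂)
    (hφ₁ : ∀ x, 0 ≤ φ₁ x) (hφ₂ : ∀ x, 0 ≤ φ₂ x) :
    ∀ t x, 0 ≤ t → 0 ≤ u₁ t x ∧ 0 ≤ u₂ t x :=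
  (isLVSolution_zero d₁ d₂ r₁ r₂ b₁ b₂).le_of_le hd₁ hd₂ hr₁ hr₂ hb₁ hb₂ hu
    (fun _ _ _ => ⟨le_rfl, le_rfl⟩) hφ₁ hφ₂

theorem IsTravelingWave.isLVSolution_translate {c : ℝ} {ψ₁ ψ₂ : ℝ → ℝ}
    (hw : IsTravelingWave d₁ d₂ r₁ r₂ b₁ b₂ c ψ₁ ψ₂) {σ : ℝ} (hσ : σ ^ 2 = 1) (s₀ : ℝ) :
    IsLVSolution d₁ d₂ r₁ r₂ b₁ b₂ (fun x => ψ₁ (σ * x + s₀)) (fun x => ψ₂ (σ * x + s₀))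
      (fun t x => ψ₁ (σ * x + c * t + s₀)) (fun t x => ψ₂ (σ * x + c * t + s₀)) where
  reg1 := regularFn_comp_affine
    (hw.bdd1.imp fun _ hM s => (abs_of_pos (hw.pos1 s)).trans_le (hM s)) hw.uc1 hw.smooth1 σ c s₀
  reg2 := regularFn_comp_affine
    (hw.bdd2.imp fun _ hM s => (abs_of_pos (hw.pos2 s)).trans_le (hM s)) hw.uc2 hw.smooth2 σ c s₀
  pde1 t x _ := by
    rw [pdT_comp_affine (hw.smooth1.differentiable two_ne_zero), pdXX_comp_affine hw.smooth1, hσ]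
    linear_combination -hw.ode1 (σ * x + c * t + s₀)
  pde2 t x _ := by
    rw [pdT_comp_affine (hw.smooth2.differentiable two_ne_zero), pdXX_comp_affine hw.smooth2, hσ]
    linear_combination -hw.ode2 (σ * x + c * t + s₀)
  init1 x := by simp
  init2 x := by simp

end LotkaVolterra

lemma HasCompactSupport.eventually_le_comp_affine {φ ψ : ℝ → ℝ} {k : ℝ}
    (hφs : HasCompactSupport φ) (hφc : Continuous φ) (hφk : ∀ x, φ x < k)
    (hψ₀ : ∀ s, 0 ≤ ψ s) (hψ : Tendsto ψ atTop (𝓝 k)) :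
    ∀ᶠ s in atTop, ∀ σ x, |σ| ≤ 1 → φ x ≤ ψ (σ * x + s) := by
  obtain ⟨xₘ, hxₘ⟩ := hφc.exists_forall_ge_of_hasCompactSupport hφs
  obtain ⟨Y, hY⟩ := eventually_atTop.1 (hψ.eventually (lt_mem_nhds (hφk xₘ)))
  obtain ⟨R, hR⟩ := hφs.isCompact.isBounded.subset_closedBall 0
  filter_upwards [eventually_ge_atTop (Y + R)] with s hs σ x hσ
  by_cases hx : x ∈ tsupport φ
  · have hxR : |x| ≤ R := by simpa using hR hx
    have hσx : |σ * x| ≤ R :=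
      (abs_mul σ x).trans_le ((mul_le_of_le_one_left (abs_nonneg x) hσ).trans hxR)
    exact (hxₘ x).trans (hY _ (by linarith [neg_abs_le (σ * x)])).le
  · rw [image_eq_zero_of_notMem_tsupport hx]
    exact hψ₀ _

lemma tendsto_sSup_image_of_le_comp_affine {u : ℝ → ℝ → ℝ} {ψ : ℝ → ℝ} {c ε s₀ : ℝ}
    (hε : 0 < ε) (hψ : Tendsto ψ atBot (𝓝 0)) (hu₀ : ∀ t x, 0 ≤ t → 0 ≤ u t x)
    (hu : ∀ σ : ℝ, σ ^ 2 = 1 → ∀ t x, 0 ≤ t → u t x ≤ ψ (σ * x + c * t + s₀)) :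
    Tendsto (fun t => sSup (u t '' {x : ℝ | (c + ε) * t ≤ |x|})) atTop (𝓝 0) := by
  have hbound (t x : ℝ) (ht : 0 ≤ t) : u t x ≤ ψ (-|x| + c * t + s₀) := by
    rcases le_total 0 x with hx | hx
    · simpa [abs_of_nonneg hx] using hu (-1) (by norm_num) t x ht
    · simpa [abs_of_nonpos hx] using hu 1 (by norm_num) t x ht
  rw [tendsto_order]
  refine ⟨fun a ha => ?_, fun a ha => ?_⟩
  · filter_upwards [eventually_ge_atTop 0] with t ht
    exact ha.trans_le (Real.sSup_nonneg (by rintro _ ⟨x, -, rfl⟩; exact hu₀ t x ht))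
  · obtain ⟨Y, hY⟩ := eventually_atBot.1 (hψ.eventually (gt_mem_nhds (half_pos ha)))
    filter_upwards [eventually_ge_atTop 0, eventually_ge_atTop ((s₀ - Y) / ε)] with t ht hYt
    refine (Real.sSup_le ?_ (half_pos ha).le).trans_lt (half_lt_self ha)
    rintro _ ⟨x, hx, rfl⟩
    rw [div_le_iff₀ hε] at hYt
    exact (hbound t x ht).trans (hY _ (by linarith [show (c + ε) * t ≤ |x| from hx])).le

theorem wave_speed_bounds_spreading_general
    (d₁ d₂ r₁ r₂ b₁ b₂ : ℝ)
    (hd₁ : 0 < d₁) (hd₂ : 0 < d₂) (hr₁ : 0 < r₁) (hr₂ : 0 < r₂)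
    (hb₁ : 0 < b₁) (hb₂ : 0 < b₂)
    (c : ℝ) (ψ₁ ψ₂ : ℝ → ℝ)
    (hw : IsTravelingWave d₁ d₂ r₁ r₂ b₁ b₂ c ψ₁ ψ₂)
    (φ₁ φ₂ : ℝ → ℝ) (hφ₁c : Continuous φ₁) (hφ₂c : Continuous φ₂)
    (hφ₁supp : HasCompactSupport φ₁) (hφ₂supp : HasCompactSupport φ₂)
    (hφ₁ : ∀ x, 0 ≤ φ₁ x ∧ φ₁ x < (1 + b₁) / (1 - b₁ * b₂))
    (hφ₂ : ∀ x, 0 ≤ φ₂ x ∧ φ₂ x < (1 + b₂) / (1 - b₁ * b₂))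
    (u₁ u₂ : ℝ → ℝ → ℝ)
    (hu : IsLVSolution d₁ d₂ r₁ r₂ b₁ b₂ φ₁ φ₂ u₁ u₂)
    (ε : ℝ) (hε : 0 < ε) :
    Tendsto (fun t => sSup (u₁ t '' {x : ℝ | (c + ε) * t ≤ |x|})) atTop (𝓝 0) ∧
    Tendsto (fun t => sSup (u₂ t '' {x : ℝ | (c + ε) * t ≤ |x|})) atTop (𝓝 0) := by
  have hu₀ := hu.nonneg hd₁.le hd₂.le hr₁.le hr₂.le hb₁.le hb₂.le
    (fun x => (hφ₁ x).1) (fun x => (hφ₂ x).1)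
  obtain ⟨s₀, hs₁, hs₂⟩ :=
    ((hφ₁supp.eventually_le_comp_affine hφ₁c (fun x => (hφ₁ x).2) (fun s => (hw.pos1 s).le)
      hw.limPos1).and
    (hφ₂supp.eventually_le_comp_affine hφ₂c (fun x => (hφ₂ x).2) (fun s => (hw.pos2 s).le)
      hw.limPos2)).exists
  have hbelow (σ : ℝ) (hσ : σ ^ 2 = 1) :
      ∀ t x, 0 ≤ t → u₁ t x ≤ ψ₁ (σ * x + c * t + s₀) ∧ u₂ t x ≤ ψ₂ (σ * x + c * t + s₀) :=
    hu.le_of_le hd₁.le hd₂.le hr₁.le hr₂.le hb₁.le hb₂.le (hw.isLVSolution_translate hσ s₀) hu₀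
      (fun x => hs₁ σ x ((sq_le_one_iff_abs_le_one σ).1 hσ.le))
      (fun x => hs₂ σ x ((sq_le_one_iff_abs_le_one σ).1 hσ.le))
  exact ⟨tendsto_sSup_image_of_le_comp_affine hε hw.limNeg1 (fun t x ht => (hu₀ t x ht).1)
      fun σ hσ t x ht => (hbelow σ hσ t x ht).1,
    tendsto_sSup_image_of_le_comp_affine hε hw.limNeg2 (fun t x ht => (hu₀ t x ht).2)
      fun σ hσ t x ht => (hbelow σ hσ t x ht).2⟩

/-- Proposition 3.9: if a traveling wave with speed `c` connecting `(0,0)` with `(k₁,k₂)`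
exists, then the spreading speeds of solutions with compactly supported initial data are
at most `c`. -/
theorem wave_speed_bounds_spreading
    (d₁ d₂ r₁ r₂ b₁ b₂ : ℝ)
    (hd₁ : 0 < d₁) (hd₂ : 0 < d₂) (hr₁ : 0 < r₁) (hr₂ : 0 < r₂)
    (hb₁ : 0 < b₁) (hb₂ : 0 < b₂) (hbb : b₁ * b₂ < 1)
    (c : ℝ) (ψ₁ ψ₂ : ℝ → ℝ)
    (hw : IsTravelingWave d₁ d₂ r₁ r₂ b₁ b₂ c ψ₁ ψ₂)
    (φ₁ φ₂ : ℝ → ℝ) (hφ₁c : Continuous φ₁) (hφ₂c : Continuous φ₂)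
    (hφ₁supp : HasCompactSupport φ₁) (hφ₂supp : HasCompactSupport φ₂)
    (hφ₁ : ∀ x, 0 ≤ φ₁ x ∧ φ₁ x < (1 + b₁) / (1 - b₁ * b₂))
    (hφ₂ : ∀ x, 0 ≤ φ₂ x ∧ φ₂ x < (1 + b₂) / (1 - b₁ * b₂))
    (u₁ u₂ : ℝ → ℝ → ℝ)
    (hu : IsLVSolution d₁ d₂ r₁ r₂ b₁ b₂ φ₁ φ₂ u₁ u₂)
    (ε : ℝ) (hε : 0 < ε) :
    Tendsto (fun t => sSup (u₁ t '' {x : ℝ | (c + ε) * t ≤ |x|})) atTop (𝓝 0) ∧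
    Tendsto (fun t => sSup (u₂ t '' {x : ℝ | (c + ε) * t ≤ |x|})) atTop (𝓝 0) :=
  wave_speed_bounds_spreading_general d₁ d₂ r₁ r₂ b₁ b₂ hd₁ hd₂ hr₁ hr₂ hb₁ hb₂ c ψ₁ ψ₂ hw φ₁ φ₂
    hφ₁c hφ₂c hφ₁supp hφ₂supp hφ₁ hφ₂ u₁ u₂ hu ε hε
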